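/- Let K be a totally real number field whose degree n over ℚ is a prime number. Then there exists an algebraic integer α with K = ℚ(α) and H(α) ≤ 2ⁿ · √|D_K|. -/

import Mathlib

/-!
Minkowski's convex body theorem, applied to the box that has half-width `B = 2√|D_K|` at one
real place `w₀` and `1` at all other places, yields a nonzero algebraic integer `α` whose
conjugates other than `σ₀(α)` lie in the open unit disc. Such an `α` generates `K`: otherwise
`σ₀(α)` would coincide with another conjugate, and then `|N(α)| < 1`. The Mahler measure of its
minimal polynomial is therefore `max 1 |σ₀(α)| ≤ 2√|D_K|`, and each coefficient is bounded by
`C(n, k)` times the Mahler measure, with `C(n, k) ≤ 2ⁿ⁻¹`.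
-/

open NumberField IntermediateField Polynomial

/-- The height of an integer polynomial: the maximum of the absolute values of its
coefficients. -/
noncomputable def polyHeight (f : Polynomial ℤ) : ℕ :=
  f.support.sup fun i => (f.coeff i).natAbs

theorem polyHeight_le_of_forall_abs_coeff_le {f : ℤ[X]} {c : ℝ}
    (h : ∀ i, |(f.coeff i : ℝ)| ≤ c) : (polyHeight f : ℝ) ≤ c := by
  have hc : 0 ≤ c := (abs_nonneg _).trans (h 0)
  refine (Nat.cast_le.mpr (Finset.sup_le fun i _ => Nat.le_floor ?_)).trans (Nat.floor_le hc)
  simpa [Nat.cast_natAbs] using h i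

theorem Polynomial.Monic.mahlerMeasure_eq_max_one_norm {p : ℂ[X]} (hp : p.Monic) {z₀ : ℂ}
    (hz₀ : z₀ ∈ p.roots) (h : ∀ z ∈ p.roots.erase z₀, ‖z‖ ≤ 1) :
    p.mahlerMeasure = max 1 ‖z₀‖ := by
  rw [mahlerMeasure_eq_leadingCoeff_mul_prod_roots, hp.leadingCoeff, norm_one, one_mul,
    ← Multiset.cons_erase hz₀, Multiset.map_cons, Multiset.prod_cons,
    Multiset.prod_eq_one fun y hy => ?_, mul_one]
  obtain ⟨z, hz, rfl⟩ := Multiset.mem_map.mp hy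
  exact max_eq_left (h z hz)

section

variable {K : Type*} [Field K] [NumberField K]

namespace NumberField.InfinitePlace

theorem embedding_mem_roots_minpoly (w : InfinitePlace K) (x : K) :
    w.embedding x ∈ ((minpoly ℚ x).map (algebraMap ℚ ℂ)).roots := by
  rw [mem_roots (map_ne_zero (minpoly.ne_zero (Algebra.IsIntegral.isIntegral x))), IsRoot,
    eval_map_algebraMap, ← RingHom.toRatAlgHom_apply, aeval_algHom_apply, minpoly.aeval,
    map_zero]

theorem norm_lt_one_of_mem_roots_minpoly_erase {w₀ : InfinitePlace K} (hw₀ : w₀.IsReal)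
    {x : K} (hx : ∀ w ≠ w₀, w x < 1) {z : ℂ}
    (hz : z ∈ ((minpoly ℚ x).map (algebraMap ℚ ℂ)).roots.erase (w₀.embedding x)) : ‖z‖ < 1 := by
  have hint : IsIntegral ℚ x := Algebra.IsIntegral.isIntegral x
  have hnodup : ((minpoly ℚ x).map (algebraMap ℚ ℂ)).roots.Nodup :=
    nodup_roots (minpoly.irreducible hint).separable.map
  obtain ⟨hz_ne, hz_root⟩ := hnodup.mem_erase_iff.mp hz
  have hz_mem : z ∈ Set.range fun φ : K →+* ℂ => φ x := by
    rw [Embeddings.range_eval_eq_rootSet_minpoly, mem_rootSet', aeval_def, ← eval_map]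
    exact ⟨map_ne_zero (minpoly.ne_zero hint), isRoot_of_mem_roots hz_root⟩
  obtain ⟨φ, rfl⟩ := hz_mem
  have hφ : mk φ ≠ w₀ := by
    rintro rfl
    have h := mk_eq_iff.mp (mk_embedding (mk φ))
    rw [conjugate_embedding_eq_of_isReal hw₀, or_self] at h
    exact hz_ne (by rw [h])
  simpa using hx _ hφ

theorem abs_coeff_minpoly_le_choose_mul_max_one {w₀ : InfinitePlace K} (hw₀ : w₀.IsReal)
    {x : 𝓞 K} (hx : ∀ w ≠ w₀, w x < 1) (k : ℕ) :
    |((minpoly ℤ (x : K)).coeff k : ℝ)| ≤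
      (minpoly ℤ (x : K)).natDegree.choose k * max 1 (w₀ x) := by
  have hint : IsIntegral ℤ (x : K) := x.isIntegral_coe
  have hmonic : (minpoly ℤ (x : K)).Monic := minpoly.monic hint
  have hmap : (minpoly ℤ (x : K)).map (Int.castRingHom ℂ) =
      (minpoly ℚ (x : K)).map (algebraMap ℚ ℂ) := by
    rw [minpoly.isIntegrallyClosed_eq_field_fractions' ℚ hint, Polynomial.map_map]
    congr 1
  calc |((minpoly ℤ (x : K)).coeff k : ℝ)|
      = ‖((minpoly ℤ (x : K)).map (Int.castRingHom ℂ)).coeff k‖ := by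
        rw [coeff_map, eq_intCast, Complex.norm_intCast]
    _ ≤ _ := norm_coeff_le_choose_mul_mahlerMeasure k _
    _ = (minpoly ℤ (x : K)).natDegree.choose k * max 1 (w₀ x) := by
        rw [hmonic.natDegree_map, hmap, ((minpoly.monic (Algebra.IsIntegral.isIntegral _)).map
          _).mahlerMeasure_eq_max_one_norm (w₀.embedding_mem_roots_minpoly _)
          fun z hz => (norm_lt_one_of_mem_roots_minpoly_erase hw₀ hx hz).le, norm_embedding_eq]

end NumberField.InfinitePlace

namespace NumberField.mixedEmbedding

open InfinitePlace

theorem exists_primitive_element_lt_one_of_isReal {w₀ : InfinitePlace K} (hw₀ : w₀.IsReal)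
    {B : NNReal} (hB : minkowskiBound K ↑1 < convexBodyLTFactor K * B) :
    ∃ a : 𝓞 K, ℚ⟮(a : K)⟯ = ⊤ ∧ w₀ a < B ∧ ∀ w ≠ w₀, w a < 1 := by
  classical
  have hvol : minkowskiBound K ↑1 <
      MeasureTheory.volume (convexBodyLT K fun w ↦ if w = w₀ then B else 1) := by
    rw [convexBodyLT_volume, ← Finset.prod_erase_mul _ _ (Finset.mem_univ w₀)]
    simp_rw [ite_pow, one_pow]
    rw [Finset.prod_ite_eq']
    simp_rw [Finset.notMem_erase, ite_false, mult, hw₀, ite_true, one_mul, pow_one]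
    exact hB
  obtain ⟨a, ha, hlt⟩ := exists_ne_zero_mem_ringOfIntegers_lt K hvol
  have hsmall : ∀ w ≠ w₀, w a < 1 := fun w hw => by simpa [hw] using hlt w
  exact ⟨a, is_primitive_element_of_infinitePlace_lt ha hsmall (Or.inl hw₀),
    by simpa using hlt w₀, hsmall⟩

theorem minkowskiBound_lt_convexBodyLTFactor_mul [IsTotallyReal K] {B : NNReal}
    (hB : √|(discr K : ℝ)| < B) : minkowskiBound K ↑1 < convexBodyLTFactor K * B := by
  rw [minkowskiBound, volume_fundamentalDomain_fractionalIdealLatticeBasis, Units.val_one,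
    FractionalIdeal.absNorm_one, Rat.cast_one, ENNReal.ofReal_one, one_mul,
    mixedEmbedding.finrank, volume_fundamentalDomain_latticeBasis, convexBodyLTFactor]
  simp only [IsTotallyReal.nrComplexPlaces_eq_zero, pow_zero, mul_one]
  rw [mul_comm, one_mul, IsTotallyReal.finrank, ENNReal.coe_pow, ENNReal.coe_ofNat]
  gcongr
  · finiteness
  · rwa [← NNReal.coe_lt_coe, Real.coe_sqrt, coe_nnnorm, Int.norm_eq_abs]

end NumberField.mixedEmbedding

end

open NumberField.InfinitePlace NumberField.mixedEmbedding

theorem totally_real_prime_degree_small_generator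
    (K : Type*) [Field K] [NumberField K]
    (n : ℕ) (hn : Module.finrank ℚ K = n)
    (htr : ∀ φ : K →+* ℂ, NumberField.ComplexEmbedding.IsReal φ) :
    ∃ α : K, IsIntegral ℤ α ∧ ℚ⟮α⟯ = ⊤ ∧
      (polyHeight (minpoly ℤ α) : ℝ) ≤
        2 ^ n * Real.sqrt |(NumberField.discr K : ℝ)| := by
  have : IsTotallyReal K := ⟨fun w => w.mk_embedding ▸ isReal_mk_iff.mpr (htr _)⟩
  obtain ⟨w₀⟩ : Nonempty (InfinitePlace K) := inferInstance
  set s := √|(discr K : ℝ)|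
  have hs : 1 ≤ s := Real.one_le_sqrt.mpr (by exact_mod_cast Int.one_le_abs (discr_ne_zero K))
  have hB : ((2 * s).toNNReal : ℝ) = 2 * s := Real.coe_toNNReal _ (by positivity)
  obtain ⟨a, hprim, ha₀, ha⟩ := exists_primitive_element_lt_one_of_isReal (IsTotallyReal.isReal w₀)
    (minkowskiBound_lt_convexBodyLTFactor_mul (by rw [hB]; linarith))
  have hint : IsIntegral ℤ (a : K) := a.isIntegral_coe
  refine ⟨a, hint, hprim, polyHeight_le_of_forall_abs_coeff_le fun k => ?_⟩
  have hdeg : (minpoly ℤ (a : K)).natDegree = n := by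
    rw [← hn, ← (Field.primitive_element_iff_minpoly_natDegree_eq ℚ _).mp hprim,
      minpoly.isIntegrallyClosed_eq_field_fractions' ℚ hint, (minpoly.monic hint).natDegree_map]
  obtain ⟨m, rfl⟩ : ∃ m, n = m + 1 := Nat.exists_eq_succ_of_ne_zero (hn ▸ Module.finrank_pos.ne')
  calc |((minpoly ℤ (a : K)).coeff k : ℝ)| ≤ (m + 1).choose k * max 1 (w₀ a) :=
        hdeg ▸ abs_coeff_minpoly_le_choose_mul_max_one (IsTotallyReal.isReal w₀) ha k
    _ ≤ 2 ^ m * (2 * s) := by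
        gcongr
        · exact_mod_cast Nat.choose_succ_le_two_pow m k
        · exact max_le (by linarith) (hB ▸ ha₀.le)
    _ = 2 ^ (m + 1) * s := by ring
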